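/- For the MPS defined below, define for each bond i ∈ {0,1,…,N} the left tensor L^{[i]} : (Fin i → Fin d) → Matrix (Fin 1) (Fin χ(i)) ℂ by L^{[i]}(σ₁,…,σ_i) = Λ^{[0]} Γ^{[1]σ₁} Λ^{[1]} Γ^{[2]σ₂} ⋯ Λ^{[i−1]} Γ^{[i]σ_i}, and the right tensor R^{[i]} : (σ_{i+1},…,σ_N) → Matrix (Fin χ(i)) (Fin 1) ℂ by R^{[i]}(σ_{i+1},…,σ_N) = Γ^{[i+1]σ_{i+1}} Λ^{[i+1]} ⋯ Γ^{[N]σ_N} Λ^{[N]} (with L^{[0]} and R^{[N]} the 1×1 identity). Then the MPS is in canonical form if and only if for every i ∈ {0,1,…,N}: Σ over all (σ₁,…,σ_i) of (L^{[i]})ᴴ L^{[i]} = I_{χ(i)} and Σ over all (σ_{i+1},…,σ_N) of R^{[i]} (R^{[i]})ᴴ = I_{χ(i)}. -/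

import Mathlib

open Matrix

/-- Canonical form: for every site `i + 1` (`i < N`), with `A = Λ i * Γ i s` and
`B = Γ i s * Λ (i+1)`, one has `∑ s, Aᴴ A = 1` and `∑ s, B Bᴴ = 1`. -/
def IsCanonicalMPS {d : ℕ} (N : ℕ) (χ : ℕ → ℕ)
    (Γ : (i : ℕ) → Fin d → Matrix (Fin (χ i)) (Fin (χ (i + 1))) ℂ)
    (Λ : (i : ℕ) → Matrix (Fin (χ i)) (Fin (χ i)) ℂ) : Prop :=
  ∀ i < N,
    (∑ s : Fin d, (Λ i * Γ i s)ᴴ * (Λ i * Γ i s) = 1) ∧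
    (∑ s : Fin d, (Γ i s * Λ (i + 1)) * (Γ i s * Λ (i + 1))ᴴ = 1)

/-- Left partial product `L^{[i]} = Λ⁰ Γ¹ Λ¹ Γ² ⋯ Λ^{i−1} Γⁱ` (with `σ` given as a function
on all of `ℕ`; the tensor `Γ k` belongs to site `k + 1`). -/
noncomputable def mpsLW {d : ℕ} (χ : ℕ → ℕ)
    (Γ : (i : ℕ) → Fin d → Matrix (Fin (χ i)) (Fin (χ (i + 1))) ℂ)
    (Λ : (i : ℕ) → Matrix (Fin (χ i)) (Fin (χ i)) ℂ) :
    (i : ℕ) → (ℕ → Fin d) → Matrix (Fin (χ 0)) (Fin (χ i)) ℂ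
  | 0, _ => Λ 0
  | (i + 1), σ => mpsLW χ Γ Λ i σ * (Λ i * Γ i (σ i))

/-- The left tensor `L^{[i]} : (σ₁, …, σ_i) ↦ Λ⁰ Γ^{[1]σ₁} Λ¹ ⋯ Λ^{i−1} Γ^{[i]σ_i}`. -/
noncomputable def mpsL {d : ℕ} [NeZero d] (χ : ℕ → ℕ)
    (Γ : (i : ℕ) → Fin d → Matrix (Fin (χ i)) (Fin (χ (i + 1))) ℂ)
    (Λ : (i : ℕ) → Matrix (Fin (χ i)) (Fin (χ i)) ℂ)
    (i : ℕ) (σ : Fin i → Fin d) : Matrix (Fin (χ 0)) (Fin (χ i)) ℂ :=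
  mpsLW χ Γ Λ i (fun k => if h : k < i then σ ⟨k, h⟩ else 0)

/-- Right partial product of `k` factors starting at bond `a`:
`Γ^{[a+1]} Λ^{a+1} Γ^{[a+2]} Λ^{a+2} ⋯ Γ^{[a+k]} Λ^{a+k}`. -/
noncomputable def mpsRW {d : ℕ} (χ : ℕ → ℕ)
    (Γ : (i : ℕ) → Fin d → Matrix (Fin (χ i)) (Fin (χ (i + 1))) ℂ)
    (Λ : (i : ℕ) → Matrix (Fin (χ i)) (Fin (χ i)) ℂ) (a : ℕ) :
    (k : ℕ) → (ℕ → Fin d) → Matrix (Fin (χ a)) (Fin (χ (a + k))) ℂ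
  | 0, _ => (1 : Matrix (Fin (χ a)) (Fin (χ a)) ℂ)
  | (k + 1), σ => mpsRW χ Γ Λ a k σ * (Γ (a + k) (σ (a + k)) * Λ (a + k + 1))

/-- The right tensor `R^{[i]} : (σ_{i+1}, …, σ_N) ↦ Γ^{[i+1]σ_{i+1}} Λ^{i+1} ⋯ Γ^{[N]σ_N} Λᴺ`
(for `i ≤ N` one has `i + (N − i) = N`). -/
noncomputable def mpsR {d : ℕ} [NeZero d] (χ : ℕ → ℕ)
    (Γ : (i : ℕ) → Fin d → Matrix (Fin (χ i)) (Fin (χ (i + 1))) ℂ)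
    (Λ : (i : ℕ) → Matrix (Fin (χ i)) (Fin (χ i)) ℂ)
    (N i : ℕ) (τ : Fin (N - i) → Fin d) : Matrix (Fin (χ i)) (Fin (χ (i + (N - i)))) ℂ :=
  mpsRW χ Γ Λ i (N - i) (fun k => if h : k - i < N - i then τ ⟨k - i, h⟩ else 0)

/-! The Gram matrices `G_L(i) = ∑ L^{[i]ᴴ} L^{[i]}` and `G_R(i) = ∑ R^{[i]} R^{[i]ᴴ}` obey the
one-step recursions `G_L(i+1) = E_L(G_L(i))` and `G_R(i) = E_R(G_R(i+1))` for the transfer maps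
`E_L(X) = ∑_σ A^σᴴ X A^σ` and `E_R(X) = ∑_σ B^σ X B^σᴴ` of the site between the two bonds, starting
from `G_L(0) = 1` and `G_R(N) = 1`. Canonical form says exactly that every transfer map is unital,
so it carries the identity along both recursions; conversely, `G(i) = G(i+1) = 1` forces the
transfer map between them to be unital. -/

theorem sum_fin_succ_pi_eq_sum_snoc {β M : Type*} [Fintype β] [AddCommMonoid M] {n : ℕ}
    (f : (Fin (n + 1) → β) → M) : ∑ σ, f σ = ∑ s, ∑ τ, f (Fin.snoc τ s) :=
  ((Fin.snocEquiv fun _ => β).sum_comp f).symm.trans (Fintype.sum_prod_type _)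

theorem sum_fin_succ_pi_eq_sum_cons {β M : Type*} [Fintype β] [AddCommMonoid M] {n : ℕ}
    (f : (Fin (n + 1) → β) → M) : ∑ σ, f σ = ∑ s, ∑ τ, f (Fin.cons s τ) :=
  ((Fin.consEquiv fun _ => β).sum_comp f).symm.trans (Fintype.sum_prod_type _)

theorem sum_sum_conjTranspose_mul_self_mul_right {ι κ m n p α : Type*} [Fintype ι] [Fintype κ]
    [Fintype m] [Fintype n] [NonUnitalSemiring α] [StarRing α]
    (X : κ → Matrix m n α) (A : ι → Matrix n p α) :
    ∑ s, ∑ τ, (X τ * A s)ᴴ * (X τ * A s) = ∑ s, (A s)ᴴ * (∑ τ, (X τ)ᴴ * X τ) * A s := by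
  simp only [conjTranspose_mul, Matrix.mul_sum, Matrix.sum_mul, Matrix.mul_assoc]

theorem sum_sum_mul_self_conjTranspose_mul_left {ι κ m n p α : Type*} [Fintype ι] [Fintype κ]
    [Fintype n] [Fintype p] [NonUnitalSemiring α] [StarRing α]
    (B : ι → Matrix m n α) (Y : κ → Matrix n p α) :
    ∑ s, ∑ τ, (B s * Y τ) * (B s * Y τ)ᴴ = ∑ s, B s * (∑ τ, Y τ * (Y τ)ᴴ) * (B s)ᴴ := by
  simp only [conjTranspose_mul, Matrix.mul_sum, Matrix.sum_mul, Matrix.mul_assoc]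

namespace MPS

variable {d : ℕ} (χ : ℕ → ℕ)
  (Γ : (i : ℕ) → Fin d → Matrix (Fin (χ i)) (Fin (χ (i + 1))) ℂ)
  (Λ : (i : ℕ) → Matrix (Fin (χ i)) (Fin (χ i)) ℂ)

def leftTransfer (i : ℕ) (X : Matrix (Fin (χ i)) (Fin (χ i)) ℂ) :
    Matrix (Fin (χ (i + 1))) (Fin (χ (i + 1))) ℂ :=
  ∑ s : Fin d, (Λ i * Γ i s)ᴴ * X * (Λ i * Γ i s)

def rightTransfer (i : ℕ) (X : Matrix (Fin (χ (i + 1))) (Fin (χ (i + 1))) ℂ) :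
    Matrix (Fin (χ i)) (Fin (χ i)) ℂ :=
  ∑ s : Fin d, (Γ i s * Λ (i + 1)) * X * (Γ i s * Λ (i + 1))ᴴ

theorem isCanonicalMPS_iff_transfer (N : ℕ) :
    IsCanonicalMPS N χ Γ Λ ↔
      ∀ i < N, leftTransfer χ Γ Λ i 1 = 1 ∧ rightTransfer χ Γ Λ i 1 = 1 := by
  simp only [IsCanonicalMPS, leftTransfer, rightTransfer, Matrix.mul_one]

theorem mpsLW_congr : ∀ (i : ℕ) {σ σ' : ℕ → Fin d}, (∀ n < i, σ n = σ' n) →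
    mpsLW χ Γ Λ i σ = mpsLW χ Γ Λ i σ'
  | 0, _, _, _ => rfl
  | i + 1, _, _, h => by
    simp only [mpsLW, mpsLW_congr i fun n hn => h n (by omega), h i (by omega)]

theorem mpsRW_congr (a : ℕ) : ∀ (k : ℕ) {σ σ' : ℕ → Fin d},
    (∀ n, a ≤ n → n < a + k → σ n = σ' n) → mpsRW χ Γ Λ a k σ = mpsRW χ Γ Λ a k σ'
  | 0, _, _, _ => rfl
  | k + 1, _, _, h => by
    simp only [mpsRW, mpsRW_congr a k fun n h₁ h₂ => h n h₁ (by omega),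
      h (a + k) (by omega) (by omega)]

theorem submatrix_finCongr_mul_rightFactor {m j j' : ℕ} (h : j' = j)
    (M : Matrix (Fin m) (Fin (χ j)) ℂ) (σ : ℕ → Fin d) :
    M.submatrix id (finCongr (congrArg χ h)) * (Γ j' (σ j') * Λ (j' + 1)) =
      (M * (Γ j (σ j) * Λ (j + 1))).submatrix id
        (finCongr (congrArg (χ <| · + 1) h)) := by
  subst h; rfl

/-- `a + 1 + k` and `a + (k + 1)` are not definitionally equal, so peeling off the first factor
forces a reindexing of the columns. -/
theorem mpsRW_succ_eq_mul_submatrix (a : ℕ) : ∀ (k : ℕ) (σ : ℕ → Fin d),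
    mpsRW χ Γ Λ a (k + 1) σ = (Γ a (σ a) * Λ (a + 1)) *
      (mpsRW χ Γ Λ (a + 1) k σ).submatrix id (finCongr (congrArg χ (Nat.succ_add a k).symm))
  | 0, σ => by
    ext; simp [mpsRW]
  | k + 1, σ => by
    rw [mpsRW, mpsRW_succ_eq_mul_submatrix a k σ, Matrix.mul_assoc]
    exact congrArg (_ * ·)
      (submatrix_finCongr_mul_rightFactor χ Γ Λ (Nat.succ_add a k).symm _ σ)

variable [NeZero d]

theorem mpsL_snoc (i : ℕ) (τ : Fin i → Fin d) (s : Fin d) :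
    mpsL χ Γ Λ (i + 1) (Fin.snoc τ s) = mpsL χ Γ Λ i τ * (Λ i * Γ i s) := by
  simp only [mpsL, mpsLW]
  congr 1
  · exact mpsLW_congr χ Γ Λ i fun n hn => by simp [hn, Nat.lt_succ_of_lt hn, Fin.snoc]
  · simp [Fin.snoc]

noncomputable def leftGram (i : ℕ) : Matrix (Fin (χ i)) (Fin (χ i)) ℂ :=
  ∑ σ : Fin i → Fin d, (mpsL χ Γ Λ i σ)ᴴ * mpsL χ Γ Λ i σ

theorem leftGram_zero (hΛ0 : Λ 0 = 1) : leftGram χ Γ Λ 0 = 1 := by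
  simp [leftGram, mpsL, mpsLW, hΛ0]

theorem leftGram_succ (i : ℕ) :
    leftGram χ Γ Λ (i + 1) = leftTransfer χ Γ Λ i (leftGram χ Γ Λ i) := by
  rw [leftGram, sum_fin_succ_pi_eq_sum_snoc]
  simp only [mpsL_snoc]
  exact sum_sum_conjTranspose_mul_self_mul_right _ _

theorem leftGram_eq_one (hΛ0 : Λ 0 = 1) :
    ∀ i, (∀ j < i, leftTransfer χ Γ Λ j 1 = 1) → leftGram χ Γ Λ i = 1
  | 0, _ => leftGram_zero χ Γ Λ hΛ0
  | i + 1, h => by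
    rw [leftGram_succ, leftGram_eq_one hΛ0 i fun j hj => h j (by omega), h i (by omega)]

/-- `mpsR χ Γ Λ N i` is `rightTensor χ Γ Λ i (N - i)` by definition; freeing the length from `N`
makes induction on it possible. -/
noncomputable def rightTensor (a k : ℕ) (τ : Fin k → Fin d) :
    Matrix (Fin (χ a)) (Fin (χ (a + k))) ℂ :=
  mpsRW χ Γ Λ a k fun n => if h : n - a < k then τ ⟨n - a, h⟩ else 0

theorem rightTensor_cons (a k : ℕ) (s : Fin d) (τ : Fin k → Fin d) :
    rightTensor χ Γ Λ a (k + 1) (Fin.cons s τ) = (Γ a s * Λ (a + 1)) *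
      (rightTensor χ Γ Λ (a + 1) k τ).submatrix id
        (finCongr (congrArg χ (Nat.succ_add a k).symm)) := by
  rw [rightTensor, mpsRW_succ_eq_mul_submatrix, rightTensor]
  congr 2
  · simp
  · refine mpsRW_congr χ Γ Λ (a + 1) k fun n h₁ h₂ => ?_
    obtain ⟨m, rfl⟩ : ∃ m, n = a + 1 + m := ⟨n - (a + 1), by omega⟩
    simp only [show a + 1 + m - a = m + 1 by omega, Nat.add_sub_cancel_left,
      show m + 1 < k + 1 by omega, show m < k by omega, dite_true]
    exact Fin.cons_succ (α := fun _ => Fin d) s τ ⟨m, by omega⟩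

noncomputable def rightGram (a k : ℕ) : Matrix (Fin (χ a)) (Fin (χ a)) ℂ :=
  ∑ τ : Fin k → Fin d, rightTensor χ Γ Λ a k τ * (rightTensor χ Γ Λ a k τ)ᴴ

theorem rightGram_zero (a : ℕ) : rightGram χ Γ Λ a 0 = 1 := by
  simp [rightGram, rightTensor, mpsRW]

theorem rightGram_succ (a k : ℕ) :
    rightGram χ Γ Λ a (k + 1) = rightTransfer χ Γ Λ a (rightGram χ Γ Λ (a + 1) k) := by
  rw [rightGram, sum_fin_succ_pi_eq_sum_cons]
  simp only [rightTensor_cons]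
  rw [sum_sum_mul_self_conjTranspose_mul_left]
  simp only [conjTranspose_submatrix, submatrix_mul_equiv, submatrix_id_id]
  rfl

theorem rightGram_eq_one :
    ∀ (k a : ℕ), (∀ j, a ≤ j → j < a + k → rightTransfer χ Γ Λ j 1 = 1) →
      rightGram χ Γ Λ a k = 1
  | 0, a, _ => rightGram_zero χ Γ Λ a
  | k + 1, a, h => by
    rw [rightGram_succ, rightGram_eq_one k (a + 1) fun j h₁ h₂ => h j (by omega) (by omega),
      h a le_rfl (by omega)]

end MPS

theorem isCanonicalMPS_iff_left_right_isometries_general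
    (N d : ℕ) [NeZero d]
    (χ : ℕ → ℕ)
    (Γ : (i : ℕ) → Fin d → Matrix (Fin (χ i)) (Fin (χ (i + 1))) ℂ)
    (Λ : (i : ℕ) → Matrix (Fin (χ i)) (Fin (χ i)) ℂ)
    (hΛ0 : Λ 0 = 1) :
    IsCanonicalMPS N χ Γ Λ ↔
      ∀ i ≤ N,
        (∑ σ : Fin i → Fin d, (mpsL χ Γ Λ i σ)ᴴ * mpsL χ Γ Λ i σ = 1) ∧
        (∑ τ : Fin (N - i) → Fin d, mpsR χ Γ Λ N i τ * (mpsR χ Γ Λ N i τ)ᴴ = 1) := by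
  change _ ↔ ∀ i ≤ N, MPS.leftGram χ Γ Λ i = 1 ∧ MPS.rightGram χ Γ Λ i (N - i) = 1
  rw [MPS.isCanonicalMPS_iff_transfer]
  constructor
  · intro h i hi
    exact ⟨MPS.leftGram_eq_one χ Γ Λ hΛ0 i fun j hj => (h j (by omega)).1,
      MPS.rightGram_eq_one χ Γ Λ (N - i) i fun j _ hj => (h j (by omega)).2⟩
  · intro h i hi
    have hk : N - i = N - (i + 1) + 1 := by omega
    constructor
    · rw [← (h i hi.le).1, ← MPS.leftGram_succ, (h (i + 1) hi).1]
    · rw [← (h (i + 1) hi).2, ← MPS.rightGram_succ, ← hk, (h i hi.le).2]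

/-- equivalent characterization of the canonical form used in the proof of
Theorem 4 of the paper: the MPS is in canonical form if and only if for every bond
`i ∈ {0, 1, …, N}` the left tensors satisfy `∑ (L^{[i]})ᴴ L^{[i]} = 1` and the right tensors
satisfy `∑ R^{[i]} (R^{[i]})ᴴ = 1`. -/
theorem isCanonicalMPS_iff_left_right_isometries
    (N d : ℕ) [NeZero d] (hN : 1 ≤ N)
    (χ : ℕ → ℕ) (hχ0 : χ 0 = 1) (hχN : χ N = 1) (hχpos : ∀ i, 1 ≤ χ i)
    (Γ : (i : ℕ) → Fin d → Matrix (Fin (χ i)) (Fin (χ (i + 1))) ℂ)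
    (Λ : (i : ℕ) → Matrix (Fin (χ i)) (Fin (χ i)) ℂ)
    (hΛ0 : Λ 0 = 1) (hΛN : Λ N = 1)
    (hΛdiag : ∀ i ≤ N, (Λ i).IsDiag)
    (hΛreal : ∀ i ≤ N, ∀ α, (Λ i α α).im = 0 ∧ 0 ≤ (Λ i α α).re)
    (hΛdesc : ∀ i ≤ N, ∀ α β : Fin (χ i), α ≤ β → (Λ i β β).re ≤ (Λ i α α).re) :
    IsCanonicalMPS N χ Γ Λ ↔
      ∀ i ≤ N,
        (∑ σ : Fin i → Fin d, (mpsL χ Γ Λ i σ)ᴴ * mpsL χ Γ Λ i σ = 1) ∧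
        (∑ τ : Fin (N - i) → Fin d, mpsR χ Γ Λ N i τ * (mpsR χ Γ Λ N i τ)ᴴ = 1) :=
  isCanonicalMPS_iff_left_right_isometries_general N d χ Γ Λ hΛ0
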